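/- Pulling back through an isometry: let V: H₁ → H₂ be an isometry, A a binary observable on H₁, B a binary observable on H₂, and ψ ∈ Pos(H₁). Then Tr((A − V†BV)†(A − V†BV)ψ) ≤ Tr((VAV† − B)†(VAV† − B) VψV†). In particular, if VAV† is ε-close to B on VψV† in the state-dependent distance, then A is ε-close to V†BV on ψ. -/

import Mathlib

open Matrix
open scoped ComplexOrder

/-!
If `V` is an isometry then `V Vᴴ` is a projection, so splitting `X` into `V Vᴴ X` and
`(1 - V Vᴴ) X` gives `Xᴴ X = (Vᴴ X)ᴴ (Vᴴ X) + ((1 - V Vᴴ) X)ᴴ ((1 - V Vᴴ) X)`: compressing by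
`Vᴴ` can only decrease the quadratic form `X ↦ Tr(Xᴴ X ψ)` of a positive semidefinite `ψ`.
Applied to `X = (V A Vᴴ - B) V`, whose compression is `Vᴴ X = A - Vᴴ B V`, this is the theorem.
-/

namespace Matrix

variable {k m n R : Type*} [Fintype m] [Fintype n] [CommRing R] [StarRing R]

lemma conjTranspose_mul_self_eq_add_of_isometry [DecidableEq m] [DecidableEq n]
    {V : Matrix m n R} (hV : Vᴴ * V = 1) (X : Matrix m k R) :
    Xᴴ * X = (Vᴴ * X)ᴴ * (Vᴴ * X) + ((1 - V * Vᴴ) * X)ᴴ * ((1 - V * Vᴴ) * X) := by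
  have hVV : ∀ Y : Matrix n k R, Vᴴ * (V * Y) = Y := fun Y => by
    rw [← Matrix.mul_assoc, hV, Matrix.one_mul]
  simp only [conjTranspose_mul, conjTranspose_sub, conjTranspose_conjTranspose,
    Matrix.sub_mul, Matrix.mul_sub, Matrix.one_mul, Matrix.mul_assoc, hVV]
  abel

variable [PartialOrder R] [IsOrderedAddMonoid R]

lemma trace_conjTranspose_mul_self_mul_nonneg (M : Matrix m n R) {ψ : Matrix n n R}
    (hψ : ψ.PosSemidef) : 0 ≤ (Mᴴ * M * ψ).trace := by
  rw [Matrix.mul_assoc, trace_mul_comm]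
  exact (hψ.mul_mul_conjTranspose_same M).trace_nonneg

lemma trace_conjTranspose_mul_self_mul_le_of_isometry [DecidableEq m] [DecidableEq n]
    [Fintype k] {V : Matrix m n R} (hV : Vᴴ * V = 1) (X : Matrix m k R) {ψ : Matrix k k R}
    (hψ : ψ.PosSemidef) :
    ((Vᴴ * X)ᴴ * (Vᴴ * X) * ψ).trace ≤ (Xᴴ * X * ψ).trace := by
  rw [conjTranspose_mul_self_eq_add_of_isometry hV X, Matrix.add_mul, trace_add]
  exact le_add_of_nonneg_right (trace_conjTranspose_mul_self_mul_nonneg _ hψ)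

end Matrix

theorem pull_back_through_isometry_general {n m : Type*} [Fintype n] [DecidableEq n]
    [Fintype m] [DecidableEq m]
    (V : Matrix m n ℂ) (hV : Vᴴ * V = 1)
    (A : Matrix n n ℂ)
    (B : Matrix m m ℂ)
    (ψ : Matrix n n ℂ) (hψ : ψ.PosSemidef) :
    ((A - Vᴴ * B * V)ᴴ * (A - Vᴴ * B * V) * ψ).trace ≤
      ((V * A * Vᴴ - B)ᴴ * (V * A * Vᴴ - B) * (V * ψ * Vᴴ)).trace := by
  set E := V * A * Vᴴ - B
  have hcompress : A - Vᴴ * B * V = Vᴴ * (E * V) := by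
    simp only [E, Matrix.sub_mul, Matrix.mul_sub, ← Matrix.mul_assoc, hV, Matrix.one_mul]
    rw [Matrix.mul_assoc A, hV, Matrix.mul_one]
  have htrace : (Eᴴ * E * (V * ψ * Vᴴ)).trace = ((E * V)ᴴ * (E * V) * ψ).trace := by
    rw [conjTranspose_mul, ← Matrix.mul_assoc, trace_mul_cycle]
    simp only [Matrix.mul_assoc]
  rw [hcompress, htrace]
  exact trace_conjTranspose_mul_self_mul_le_of_isometry hV _ hψ

/-- Pulling back a state-dependent closeness statement through an isometry:
`Tr((A − V†BV)†(A − V†BV)ψ) ≤ Tr((VAV† − B)†(VAV† − B) VψV†)`. -/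
theorem pull_back_through_isometry {n m : Type*} [Fintype n] [DecidableEq n]
    [Fintype m] [DecidableEq m]
    (V : Matrix m n ℂ) (hV : Vᴴ * V = 1)
    (A : Matrix n n ℂ) (hAherm : Aᴴ = A) (hAsq : A * A = 1)
    (B : Matrix m m ℂ) (hBherm : Bᴴ = B) (hBsq : B * B = 1)
    (ψ : Matrix n n ℂ) (hψ : ψ.PosSemidef) :
    ((A - Vᴴ * B * V)ᴴ * (A - Vᴴ * B * V) * ψ).trace ≤
      ((V * A * Vᴴ - B)ᴴ * (V * A * Vᴴ - B) * (V * ψ * Vᴴ)).trace :=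
  pull_back_through_isometry_general V hV A B ψ hψ
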